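/- For every type x, the space L(x) is a finite-dimensional complex vector space, and for all types x, y ∈ Ty the dimension is multiplicative under the parallel product of types: dim_ℂ L(x ⊛ y) = dim_ℂ L(x) · dim_ℂ L(y). -/

import Mathlib

inductive Ty (Λ : Type) : Type
  | elem : List Λ → Ty Λ
  | arrow : Ty Λ → Ty Λ → Ty Λ

namespace Ty

variable {Λ : Type}

def ord : Ty Λ → ℕ
  | elem _ => 0
  | arrow a b => 1 + max a.ord b.ord

def par : Ty Λ → Ty Λ → Ty Λ
  | elem v, elem w => elem (v ++ w)
  | elem v, arrow c d => arrow c (par (elem v) d)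
  | arrow a b, elem w => arrow a (par b (elem w))
  | arrow a b, arrow c d =>
    if (arrow a b).ord < (arrow c d).ord then arrow c (par (arrow a b) d)
    else if (arrow a b).ord = (arrow c d).ord then arrow (par a c) (par b d)
    else arrow a (par b (arrow c d))

theorem ord_par (x y : Ty Λ) : (x.par y).ord = max x.ord y.ord := by
  induction x, y using par.induct with
  | case1 v w => simp [par, ord]
  | case2 v c d ih => simp_all [par, ord]
  | case3 a b w ih => simp_all [par, ord]
  | case4 a b c d h ih => rw [par, if_pos h]; simp_all [ord]; omega
  | case5 a b c d h1 h2 ih1 ih2 => rw [par, if_neg h1, if_pos h2]; simp_all [ord]; omega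
  | case6 a b c d h1 h2 ih => rw [par, if_neg h1, if_neg h2]; simp_all [ord]; omega

theorem par_elem_elem (v w : List Λ) : (elem v).par (elem w) = elem (v ++ w) := by
  rw [par]

theorem par_arrow_arrow {a b c d : Ty Λ} (h : (arrow a b).ord = (arrow c d).ord) :
    (arrow a b).par (arrow c d) = arrow (a.par c) (b.par d) := by
  rw [par, if_neg (by omega), if_pos h]

theorem par_lt {x c d : Ty Λ} (h : x.ord < (arrow c d).ord) :
    x.par (arrow c d) = arrow c (x.par d) := by
  cases x with
  | elem v => rw [par]
  | arrow a b => rw [par, if_pos h]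

theorem par_gt {a b y : Ty Λ} (h : y.ord < (arrow a b).ord) :
    (arrow a b).par y = arrow a (b.par y) := by
  cases y with
  | elem w => rw [par]
  | arrow c d => rw [par, if_neg (by omega), if_neg (by omega)]

end Ty

namespace HigherOrder

open scoped TensorProduct ComplexOrder

variable {Λ : Type} (dm : Λ → ℕ)

/-- Dimension of the Hilbert space attached to a word of labels:
`H_ε = H_{A₁} ⊗ ⋯ ⊗ H_{Aₙ}`, with `H_A = ℂ^(dm A)`. -/
def dimw (w : List Λ) : ℕ := (w.map dm).prod

/-- The family of spaces of higher-order linear maps: `L(ε) = End(H_ε)` for an elementary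
type `ε` and `L(a → b) = Hom(L a, L b)`, packaged as objects of `ModuleCat ℂ`. -/
noncomputable def L : Ty Λ → ModuleCat ℂ
  | .elem w => ModuleCat.of ℂ (Matrix (Fin (dimw dm w)) (Fin (dimw dm w)) ℂ)
  | .arrow a b => ModuleCat.of ℂ (↑(L a) →ₗ[ℂ] ↑(L b))

end HigherOrder

namespace Ty

variable {Λ : Type}

/-- The dimension of `Hom(L a, L b)` is `dim L(a) · dim L(b)`, so the dimension of `L` is a
valuation of this kind; the parallel product only regroups the factors. -/
theorem map_par {M : Type*} [CommMonoid M] (f : Ty Λ → M)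
    (map_elem_append : ∀ v w, f (elem (v ++ w)) = f (elem v) * f (elem w))
    (map_arrow : ∀ a b, f (arrow a b) = f a * f b) (x y : Ty Λ) :
    f (x.par y) = f x * f y := by
  induction x, y using par.induct with
  | case1 v w => rw [par_elem_elem, map_elem_append]
  | case2 v c d ih => rw [par_lt (by simp [ord]), map_arrow, ih, map_arrow, mul_left_comm]
  | case3 a b w ih => rw [par_gt (by simp [ord]), map_arrow, ih, map_arrow, mul_assoc]
  | case4 a b c d h ih => rw [par_lt h, map_arrow, ih, map_arrow c d, mul_left_comm]
  | case5 a b c d _ h ih₁ ih₂ =>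
    rw [par_arrow_arrow h, map_arrow, ih₁, ih₂, map_arrow a b, map_arrow c d, mul_mul_mul_comm]
  | case6 a b c d h₁ h₂ ih =>
    rw [par_gt (by omega), map_arrow, ih, map_arrow a b, mul_assoc]

end Ty

namespace HigherOrder

variable {Λ : Type} (dm : Λ → ℕ)

theorem dimw_append (v w : List Λ) : dimw dm (v ++ w) = dimw dm v * dimw dm w := by
  simp [dimw]

instance finiteDimensional_L : ∀ x : Ty Λ, FiniteDimensional ℂ (L dm x)
  | .elem w => inferInstanceAs (FiniteDimensional ℂ (Matrix (Fin (dimw dm w)) (Fin (dimw dm w)) ℂ))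
  | .arrow a b =>
    have := finiteDimensional_L a
    have := finiteDimensional_L b
    inferInstanceAs (FiniteDimensional ℂ (L dm a →ₗ[ℂ] L dm b))

theorem finrank_L_elem (w : List Λ) : Module.finrank ℂ (L dm (.elem w)) = dimw dm w * dimw dm w :=
  (Module.finrank_matrix ℂ ℂ (Fin (dimw dm w)) (Fin (dimw dm w))).trans (by simp)

theorem finrank_L_arrow (a b : Ty Λ) :
    Module.finrank ℂ (L dm (.arrow a b)) = Module.finrank ℂ (L dm a) * Module.finrank ℂ (L dm b) :=
  Module.finrank_linearMap ℂ ℂ (L dm a) (L dm b)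

end HigherOrder

open HigherOrder in
/-- Every space `L x` is a finite-dimensional complex vector space, and the dimension is
multiplicative under the parallel product of types. -/
theorem finiteDimensional_and_finrank_par {Λ : Type} (dm : Λ → ℕ) :
    (∀ x : Ty Λ, FiniteDimensional ℂ ↑(L dm x)) ∧
    (∀ x y : Ty Λ, Module.finrank ℂ ↑(L dm (x.par y)) =
      Module.finrank ℂ ↑(L dm x) * Module.finrank ℂ ↑(L dm y)) := by
  refine ⟨finiteDimensional_L dm, Ty.map_par (fun x => Module.finrank ℂ (L dm x)) ?_ ?_⟩
  · intro v w
    simp only [finrank_L_elem, dimw_append]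
    ring
  · exact finrank_L_arrow dm
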